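/- arXiv:1304.7178 — 2 statements merged into one kernel-verified Lean document; each statement's English description precedes it below -/
import Mathlib

section
/- Let T = [a, b] ⊂ ℝ with a < b, and let h ∈ ℝ with 0 < |h| ≤ (b − a)/2. Define the temporal edge-correction weight w : ℝ → ℝ by w(t) = 1 if both a ≤ t − |h| and t + |h| ≤ b (i.e. both ends of the interval of length 2|h| centred at t lie within [a, b]), and w(t) = 1/2 otherwise. Then ∫_a^b 1_{[a,b]}(t + h) / w(t) dt = b − a. (This is the temporal part of the step (*) = 1 in the proof that the estimator of the spatio-temporal inhomogeneous K-function with the isotropic edge-correction factor is unbiased.) -/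
/-!
Put `k = |h|`. For `h ≥ 0` the interval `[a, b]` splits into `[a, a + k]`, where the weight
is `1/2` but `t + h` stays in `[a, b]` (integrand `2`), the core `[a + k, b - k]` (integrand `1`),
and `[b - k, b]`, where `t + h` has left `[a, b]` (integrand `0`): the total is
`2k + (b - a - 2k) = b - a`. The reflection `t ↦ a + b - t` preserves the weight and turns
`h` into `-h`, which settles `h ≤ 0`.
-/

open MeasureTheory Set

section ConstOnIoo

variable {E : Type*} [NormedAddCommGroup E] {f : ℝ → E} {c : E} {x y : ℝ}

theorem intervalIntegrable_of_eqOn_Ioo_const (hxy : x ≤ y) (hf : EqOn f (fun _ => c) (Ioo x y)) :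
    IntervalIntegrable f volume x y :=
  (intervalIntegrable_congr_uIoo (uIoo_of_le hxy ▸ hf)).mpr intervalIntegrable_const

variable [NormedSpace ℝ E] [CompleteSpace E]

theorem integral_eq_of_eqOn_Ioo_const (hxy : x ≤ y) (hf : EqOn f (fun _ => c) (Ioo x y)) :
    ∫ t in x..y, f t = (y - x) • c := by
  rw [intervalIntegral.integral_congr_Ioo_of_le hxy hf, intervalIntegral.integral_const]

theorem integral_eq_of_eqOn_Ioo_const₃ {x₁ x₂ x₃ x₄ : ℝ} {c₁ c₂ c₃ : E}
    (h₁₂ : x₁ ≤ x₂) (h₂₃ : x₂ ≤ x₃) (h₃₄ : x₃ ≤ x₄)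
    (hf₁ : EqOn f (fun _ => c₁) (Ioo x₁ x₂)) (hf₂ : EqOn f (fun _ => c₂) (Ioo x₂ x₃))
    (hf₃ : EqOn f (fun _ => c₃) (Ioo x₃ x₄)) :
    ∫ t in x₁..x₄, f t = (x₂ - x₁) • c₁ + (x₃ - x₂) • c₂ + (x₄ - x₃) • c₃ := by
  have i₁ := intervalIntegrable_of_eqOn_Ioo_const h₁₂ hf₁
  have i₂ := intervalIntegrable_of_eqOn_Ioo_const h₂₃ hf₂
  have i₃ := intervalIntegrable_of_eqOn_Ioo_const h₃₄ hf₃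
  rw [← intervalIntegral.integral_add_adjacent_intervals (i₁.trans i₂) i₃,
    ← intervalIntegral.integral_add_adjacent_intervals i₁ i₂,
    integral_eq_of_eqOn_Ioo_const h₁₂ hf₁, integral_eq_of_eqOn_Ioo_const h₂₃ hf₂,
    integral_eq_of_eqOn_Ioo_const h₃₄ hf₃]

end ConstOnIoo

/-- The temporal factor `w_{ij}^{(t)}` on `T = [a, b]`, with `k = |t_i - t_j|` and `t = t_i`. -/
noncomputable def edgeWeight (a b k t : ℝ) : ℝ := if a ≤ t - k ∧ t + k ≤ b then 1 else 1 / 2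

section EdgeWeight

variable {a b k t : ℝ}

theorem edgeWeight_of_mem_Icc (ht : t ∈ Icc (a + k) (b - k)) : edgeWeight a b k t = 1 :=
  if_pos ⟨by linarith [ht.1], by linarith [ht.2]⟩

theorem edgeWeight_of_lt_add (ht : t < a + k) : edgeWeight a b k t = 1 / 2 :=
  if_neg fun hcore => by linarith [hcore.1]

theorem edgeWeight_reflect : edgeWeight a b k (a + b - t) = edgeWeight a b k t := by
  have hcore : (a ≤ a + b - t - k ∧ a + b - t + k ≤ b) ↔ (a ≤ t - k ∧ t + k ≤ b) := by
    constructor <;> rintro ⟨h₁, h₂⟩ <;> constructor <;> linarith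
  simp only [edgeWeight, hcore]

theorem reflect_mem_Icc_iff : a + b - t ∈ Icc a b ↔ t ∈ Icc a b := by
  simp only [mem_Icc]
  constructor <;> rintro ⟨h₁, h₂⟩ <;> constructor <;> linarith

end EdgeWeight

theorem integral_indicator_add_div_edgeWeight_of_nonneg {a b k : ℝ} (hk : 0 ≤ k)
    (hkb : k ≤ (b - a) / 2) :
    ∫ t in a..b, (Icc a b).indicator (fun _ => (1 : ℝ)) (t + k) / edgeWeight a b k t
      = b - a := by
  have hleft : EqOn (fun t => (Icc a b).indicator (fun _ => (1 : ℝ)) (t + k) / edgeWeight a b k t)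
      (fun _ => 2) (Ioo a (a + k)) := fun t ht => by
    have hmem : t + k ∈ Icc a b := ⟨by linarith [ht.1], by linarith [ht.2]⟩
    simp only [indicator_of_mem hmem, edgeWeight_of_lt_add ht.2]
    norm_num
  have hcore : EqOn (fun t => (Icc a b).indicator (fun _ => (1 : ℝ)) (t + k) / edgeWeight a b k t)
      (fun _ => 1) (Ioo (a + k) (b - k)) := fun t ht => by
    have hmem : t + k ∈ Icc a b := ⟨by linarith [ht.1], by linarith [ht.2]⟩
    simp only [indicator_of_mem hmem, edgeWeight_of_mem_Icc (Ioo_subset_Icc_self ht), div_one]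
  have hright : EqOn (fun t => (Icc a b).indicator (fun _ => (1 : ℝ)) (t + k) / edgeWeight a b k t)
      (fun _ => 0) (Ioo (b - k) b) := fun t ht => by
    have hmem : t + k ∉ Icc a b := fun hmem => by linarith [hmem.2, ht.1]
    simp only [indicator_of_notMem hmem, zero_div]
  rw [integral_eq_of_eqOn_Ioo_const₃ (by linarith) (by linarith) (by linarith) hleft hcore hright]
  simp only [smul_eq_mul]
  ring

theorem integral_indicator_add_div_edgeWeight {a b h : ℝ} (hhb : |h| ≤ (b - a) / 2) :
    ∫ t in a..b, (Icc a b).indicator (fun _ => (1 : ℝ)) (t + h) / edgeWeight a b |h| t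
      = b - a := by
  rcases le_total 0 h with hh | hh
  · rw [abs_of_nonneg hh] at hhb ⊢
    exact integral_indicator_add_div_edgeWeight_of_nonneg hh hhb
  · rw [abs_of_nonpos hh] at hhb ⊢
    have hreflect := intervalIntegral.integral_comp_sub_left (a := a) (b := b)
      (fun t => (Icc a b).indicator (fun _ => (1 : ℝ)) (t + h) / edgeWeight a b (-h) t) (a + b)
    simp only [add_sub_cancel_right, add_sub_cancel_left] at hreflect
    rw [← hreflect, ← integral_indicator_add_div_edgeWeight_of_nonneg (neg_nonneg.mpr hh) hhb]
    congr 1 with t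
    rw [edgeWeight_reflect, show a + b - t + h = a + b - (t + -h) by ring]
    simp only [indicator_apply, reflect_mem_Icc_iff]

theorem temporal_isotropic_edge_correction_general
    (a b : ℝ)
    (h : ℝ) (hhb : |h| ≤ (b - a) / 2)
    (w : ℝ → ℝ)
    (hw : ∀ t, w t = if a ≤ t - |h| ∧ t + |h| ≤ b then (1 : ℝ) else 1 / 2) :
    ∫ t in a..b, (Set.Icc a b).indicator (fun _ => (1 : ℝ)) (t + h) / w t
      = b - a := by
  obtain rfl : w = edgeWeight a b |h| := funext hw
  exact integral_indicator_add_div_edgeWeight hhb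

/-- The temporal part of the step `(*) = 1` in the proof of unbiasedness of the
STIK-function estimator with the isotropic edge-correction factor:
`∫_a^b 1_{[a,b]}(t + h) / w(t) dt = b − a`, where `w(t) = 1` if both ends of the
interval of length `2|h|` centred at `t` lie within `[a, b]`, and `1/2` otherwise. -/
theorem temporal_isotropic_edge_correction
    (a b : ℝ) (hab : a < b)
    (h : ℝ) (hh0 : 0 < |h|) (hhb : |h| ≤ (b - a) / 2)
    (w : ℝ → ℝ)
    (hw : ∀ t, w t = if a ≤ t - |h| ∧ t + |h| ≤ b then (1 : ℝ) else 1 / 2) :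
    ∫ t in a..b, (Set.Icc a b).indicator (fun _ => (1 : ℝ)) (t + h) / w t
      = b - a :=
  temporal_isotropic_edge_correction_general a b h hhb w hw
end

section
/- Let σ > 0 and α > 0, and define φ : ℝ² × ℝ → ℝ by φ(s, t) = (2πσ²)⁻¹ exp(−‖s‖²/(2σ²)) · α e^{−αt} 1_{{t ≥ 0}}. Then for every (u, v) ∈ ℝ² × ℝ, ∫_{ℝ²×ℝ} φ(y) · φ(y + (u, v)) dy = (α/(8πσ²)) exp(−‖u‖²/(4σ²) − α|v|). Consequently, the pair correlation function g(u, v) = 1 + (1/ν)(φ ∗ φ̃)(u, v) of the shot-noise Cox process with parent intensity ν > 0 and offspring dispersal density φ equals 1 + (α/(8πσ²ν)) exp(−‖u‖²/(4σ²) − α|v|). -/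
open MeasureTheory Real Set

/-!
The density factorizes as `φ(s, t) = f(s) g(t)` with a Gaussian `f` and an exponential `g`, so by
Fubini the autocorrelation `∫ φ(y) φ(y + (u, v)) dy` is the product of the two one-factor
autocorrelations. For the Gaussian, completing the square
`‖s‖² + ‖s + u‖² = 2‖s + u/2‖² + ‖u‖²/2` reduces it to a Gaussian integral. For the
exponential, the integrand is `α² e^{-αv} e^{-2αt}` on `t ≥ max(0, -v)` and zero elsewhere,
which gives `(α/2) e^{-α|v|}`. The pair correlation function uses `φ ∗ φ̃ (u, v)`, the same
autocorrelation at `(-u, -v)`, and the formula is even.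
-/

lemma integral_exponential_density_mul_shift {α : ℝ} (hα : 0 < α) (v : ℝ) :
    ∫ t : ℝ, (if 0 ≤ t then α * exp (-α * t) else 0) *
        (if 0 ≤ t + v then α * exp (-α * (t + v)) else 0)
      = α / 2 * exp (-α * |v|) := by
  have h_indicator : ∀ t : ℝ, (if 0 ≤ t then α * exp (-α * t) else 0) *
      (if 0 ≤ t + v then α * exp (-α * (t + v)) else 0)
      = (Ici (max 0 (-v))).indicator
          (fun t => α ^ 2 * exp (-α * v) * exp (-(2 * α) * t)) t := by
    intro t
    by_cases ht : max 0 (-v) ≤ t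
    · obtain ⟨ht0, htv⟩ := max_le_iff.1 ht
      rw [indicator_of_mem (mem_Ici.2 ht), if_pos ht0, if_pos (by linarith),
        mul_assoc (α ^ 2), ← exp_add, show -α * v + -(2 * α) * t = -α * t + -α * (t + v) by ring,
        exp_add]
      ring
    · rw [indicator_of_notMem (by simpa using ht)]
      rcases lt_max_iff.1 (not_le.1 ht) with h | h
      · rw [if_neg (by linarith), zero_mul]
      · rw [if_neg (show ¬0 ≤ t + v by linarith), mul_zero]
  have h_abs : -α * v + -(2 * α) * max 0 (-v) = -α * |v| := by
    rcases le_total 0 v with h | h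
    · rw [max_eq_left (by linarith), abs_of_nonneg h]; ring
    · rw [max_eq_right (by linarith), abs_of_nonpos h]; ring
  simp_rw [h_indicator]
  rw [integral_indicator measurableSet_Ici, integral_Ici_eq_integral_Ioi, integral_const_mul,
    integral_exp_mul_Ioi (by linarith), ← h_abs, exp_add]
  field_simp

lemma norm_sq_add_norm_add_sq {V : Type*} [NormedAddCommGroup V] [InnerProductSpace ℝ V]
    (s u : V) : ‖s‖ ^ 2 + ‖s + u‖ ^ 2 = 2 * ‖s + (2⁻¹ : ℝ) • u‖ ^ 2 + ‖u‖ ^ 2 / 2 := by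
  rw [norm_add_sq_real, norm_add_sq_real, inner_smul_right, norm_smul, mul_pow]
  norm_num
  ring

lemma integral_gaussian_mul_shift {V : Type*} [NormedAddCommGroup V] [InnerProductSpace ℝ V]
    [FiniteDimensional ℝ V] [MeasurableSpace V] [BorelSpace V] {σ : ℝ} (hσ : σ ≠ 0) (u : V) :
    ∫ s : V, exp (-‖s‖ ^ 2 / (2 * σ ^ 2)) * exp (-‖s + u‖ ^ 2 / (2 * σ ^ 2))
      = (π * σ ^ 2) ^ (Module.finrank ℝ V / 2 : ℝ) * exp (-‖u‖ ^ 2 / (4 * σ ^ 2)) := by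
  have h_complete_square : ∀ s : V,
      exp (-‖s‖ ^ 2 / (2 * σ ^ 2)) * exp (-‖s + u‖ ^ 2 / (2 * σ ^ 2))
        = exp (-‖u‖ ^ 2 / (4 * σ ^ 2)) * exp (-(σ ^ 2)⁻¹ * ‖s + (2⁻¹ : ℝ) • u‖ ^ 2) := by
    intro s
    rw [← exp_add, ← exp_add]
    congr 1
    rw [← add_div, ← neg_add, norm_sq_add_norm_add_sq]
    field_simp
    ring
  simp_rw [h_complete_square]
  rw [integral_const_mul, integral_add_right_eq_self (fun s : V => exp (-(σ ^ 2)⁻¹ * ‖s‖ ^ 2)),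
    GaussianFourier.integral_rexp_neg_mul_sq_norm (by positivity), div_inv_eq_mul, mul_comm]

lemma integral_mul_shift_of_separable {E F : Type*} [MeasureSpace E] [MeasureSpace F]
    [SFinite (volume : Measure E)] [SFinite (volume : Measure F)] [Add E] [Add F]
    {φ : E × F → ℝ} {f : E → ℝ} {g : F → ℝ} (hφ : ∀ s t, φ (s, t) = f s * g t) (u : E) (v : F) :
    ∫ y, φ y * φ (y + (u, v)) = (∫ s, f s * f (s + u)) * ∫ t, g t * g (t + v) := by
  have h_separate : ∀ y : E × F, φ y * φ (y + (u, v))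
      = (f y.1 * f (y.1 + u)) * (g y.2 * g (y.2 + v)) := by
    rintro ⟨s, t⟩
    rw [Prod.mk_add_mk, hφ, hφ]
    ring
  simp_rw [h_separate]
  rw [Measure.volume_eq_prod]
  exact integral_prod_mul (fun s => f s * f (s + u)) (fun t => g t * g (t + v))

lemma integral_dispersal_mul_shift {σ α : ℝ} (hσ : σ ≠ 0) (hα : 0 < α)
    {φ : EuclideanSpace ℝ (Fin 2) × ℝ → ℝ}
    (hφ : ∀ s t, φ (s, t) = (2 * π * σ ^ 2)⁻¹ * exp (-‖s‖ ^ 2 / (2 * σ ^ 2)) *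
        (if 0 ≤ t then α * exp (-α * t) else 0))
    (u : EuclideanSpace ℝ (Fin 2)) (v : ℝ) :
    ∫ y, φ y * φ (y + (u, v))
      = α / (8 * π * σ ^ 2) * exp (-‖u‖ ^ 2 / (4 * σ ^ 2) - α * |v|) := by
  rw [integral_mul_shift_of_separable hφ, integral_exponential_density_mul_shift hα]
  simp_rw [mul_mul_mul_comm _ (exp _)]
  rw [integral_const_mul, integral_gaussian_mul_shift hσ, finrank_euclideanSpace_fin,
    Nat.cast_ofNat, div_self two_ne_zero, rpow_one, sub_eq_add_neg, exp_add, ← neg_mul]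
  field_simp
  norm_num

theorem shot_noise_cox_pcf_general
    (σ α ν : ℝ) (hσ : 0 < σ) (hα : 0 < α)
    (φ : EuclideanSpace ℝ (Fin 2) × ℝ → ℝ)
    (hφ : ∀ s t, φ (s, t) = (2 * π * σ ^ 2)⁻¹ * Real.exp (-‖s‖ ^ 2 / (2 * σ ^ 2)) *
        (if 0 ≤ t then α * Real.exp (-α * t) else 0))
    (u : EuclideanSpace ℝ (Fin 2)) (v : ℝ) :
    (∫ y, φ y * φ (y + (u, v)) ∂volume
        = α / (8 * π * σ ^ 2) * Real.exp (-‖u‖ ^ 2 / (4 * σ ^ 2) - α * |v|)) ∧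
    1 + (1 / ν) * ∫ y, φ y * φ (y - (u, v)) ∂volume
        = 1 + α / (8 * π * σ ^ 2 * ν) * Real.exp (-‖u‖ ^ 2 / (4 * σ ^ 2) - α * |v|) := by
  refine ⟨integral_dispersal_mul_shift hσ.ne' hα hφ u v, ?_⟩
  simp_rw [fun y => sub_eq_add_neg y (u, v), Prod.neg_mk]
  rw [integral_dispersal_mul_shift hσ.ne' hα hφ (-u) (-v), norm_neg, abs_neg]
  ring

/-- For the spatio-temporal offspring dispersal density
`φ(s,t) = (2πσ²)⁻¹ exp(−‖s‖²/(2σ²)) · α e^{−αt} 1_{t ≥ 0}`, one has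
`∫ φ(y) φ(y + (u,v)) dy = (α/(8πσ²)) exp(−‖u‖²/(4σ²) − α|v|)`; consequently the
pair correlation function `g(u,v) = 1 + (1/ν)(φ ∗ φ̃)(u,v)` of the shot-noise Cox
process with parent intensity `ν > 0` equals
`1 + (α/(8πσ²ν)) exp(−‖u‖²/(4σ²) − α|v|)`. -/
theorem shot_noise_cox_pcf
    (σ α ν : ℝ) (hσ : 0 < σ) (hα : 0 < α) (hν : 0 < ν)
    (φ : EuclideanSpace ℝ (Fin 2) × ℝ → ℝ)
    (hφ : ∀ s t, φ (s, t) = (2 * π * σ ^ 2)⁻¹ * Real.exp (-‖s‖ ^ 2 / (2 * σ ^ 2)) *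
        (if 0 ≤ t then α * Real.exp (-α * t) else 0))
    (u : EuclideanSpace ℝ (Fin 2)) (v : ℝ) :
    (∫ y, φ y * φ (y + (u, v)) ∂volume
        = α / (8 * π * σ ^ 2) * Real.exp (-‖u‖ ^ 2 / (4 * σ ^ 2) - α * |v|)) ∧
    1 + (1 / ν) * ∫ y, φ y * φ (y - (u, v)) ∂volume
        = 1 + α / (8 * π * σ ^ 2 * ν) * Real.exp (-‖u‖ ^ 2 / (4 * σ ^ 2) - α * |v|) :=
  shot_noise_cox_pcf_general σ α ν hσ hα φ hφ u v
end
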